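/- arXiv:2411.16418 — 2 statements merged into one kernel-verified Lean document; each statement's English description precedes it below -/
import Mathlib

section
/- Let Ω⊂ℝ^n be a bounded domain with a C^∞(Ω̄) defining function ρ such that (1−|∇ρ|²)/ρ extends to a function in C^∞(Ω̄). Let a>0, b, c, s be real constants with s>0 and a s(s−1) + b s + c = 0, and let L = aρ²Δ + bρ∇ρ·∇ + c. Then for every ψ ∈ C^∞(Ω̄) there exists η ∈ C^∞(Ω̄) such that L(ψρ^s) = η ρ^{s+1} in Ω. -/
open Set Filter Topology

noncomputable section

abbrev En (n : ℕ) : Type := EuclideanSpace ℝ (Fin n)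

variable {n : ℕ}

/-- The partial derivative `∂ᵢ w` (computed with the full-space derivative). -/
noncomputable def pd (i : Fin n) (w : En n → ℝ) (x : En n) : ℝ :=
  fderiv ℝ w x (EuclideanSpace.single i 1)

/-- Iterated partial derivatives along a list of coordinate directions. -/
noncomputable def pdAll : List (Fin n) → (En n → ℝ) → En n → ℝ
  | [], w => w
  | i :: l, w => pd i (pdAll l w)

/-- Second-order partial derivative `∂ᵢ∂ⱼ w`. -/
noncomputable def pd2 (i j : Fin n) (w : En n → ℝ) : En n → ℝ := pd i (pd j w)

/-- The sup norm `|w|_{L^∞(E)}`. -/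
noncomputable def supNorm (E : Set (En n)) (w : En n → ℝ) : ℝ :=
  sSup ((fun x => |w x|) '' E)

/-- The Hölder seminorm `[w]_{C^β(E)}`. -/
noncomputable def holderSemi (β : ℝ) (E : Set (En n)) (w : En n → ℝ) : ℝ :=
  sSup ((fun p : En n × En n => |w p.1 - w p.2| / dist p.1 p.2 ^ β) '' (E ×ˢ E))

/-- The Hölder norm `|w|_{C^β(E)} = |w|_{L^∞(E)} + [w]_{C^β(E)}`. -/
noncomputable def holderNorm (β : ℝ) (E : Set (En n)) (w : En n → ℝ) : ℝ :=
  supNorm E w + holderSemi β E w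

/-- `w` is `β`-Hölder continuous on `E`. -/
def IsHolderOn (β : ℝ) (E : Set (En n)) (w : En n → ℝ) : Prop :=
  ∃ C : ℝ, ∀ x ∈ E, ∀ y ∈ E, |w x - w y| ≤ C * dist x y ^ β

/-- `w` is bounded on `E`. -/
def BoundedOn (E : Set (En n)) (w : En n → ℝ) : Prop :=
  ∃ M : ℝ, ∀ x ∈ E, |w x| ≤ M

/-- `w ∈ C^{k,β}(Ē)`: `w` is `C^k` in the open set `Ω`, all derivatives of order `≤ k`
extend continuously to the closure, and the order-`k` derivatives are `β`-Hölder. -/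
def MemHolderBar (k : ℕ) (β : ℝ) (Ω : Set (En n)) (w : En n → ℝ) : Prop :=
  ContinuousOn w (closure Ω) ∧ ContDiffOn ℝ k w Ω ∧
  (∀ l : List (Fin n), l.length ≤ k →
    ∃ g : En n → ℝ, ContinuousOn g (closure Ω) ∧ EqOn (pdAll l w) g Ω) ∧
  (∀ l : List (Fin n), l.length = k → IsHolderOn β Ω (pdAll l w))

/-- `w ∈ C^{k,β}(Ω)`: the interior Hölder class (Hölder on compact subsets). -/
def MemHolderLoc (k : ℕ) (β : ℝ) (Ω : Set (En n)) (w : En n → ℝ) : Prop :=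
  ContDiffOn ℝ k w Ω ∧
  ∀ K : Set (En n), K ⊆ Ω → IsCompact K →
    ∀ l : List (Fin n), l.length = k → IsHolderOn β K (pdAll l w)

/-- The norm `|w|_{C^{k,β}(Ē)}`. -/
noncomputable def holderNormCk (k : ℕ) (β : ℝ) (Ω : Set (En n)) (w : En n → ℝ) : ℝ :=
  (∑ i ∈ Finset.range (k + 1), ∑ v : Fin i → Fin n, supNorm Ω (pdAll (List.ofFn v) w)) +
  ∑ v : Fin k → Fin n, holderSemi β Ω (pdAll (List.ofFn v) w)

/-- The uniformly degenerate operator `L = ρ² a_{ij}∂_{ij} + ρ b_i ∂_i + c`. -/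
noncomputable def Lop (ρ : En n → ℝ) (a : Fin n → Fin n → En n → ℝ)
    (b : Fin n → En n → ℝ) (c : En n → ℝ) (w : En n → ℝ) (x : En n) : ℝ :=
  (ρ x) ^ 2 * ∑ i, ∑ j, a i j x * pd2 i j w x
    + ρ x * ∑ i, b i x * pd i w x + c x * w x

/-- Symmetry and uniform ellipticity `λ|ξ|² ≤ a_{ij}ξ_iξ_j ≤ Λ|ξ|²` on `E`. -/
def Elliptic (E : Set (En n)) (a : Fin n → Fin n → En n → ℝ) (lam Lam : ℝ) : Prop :=
  (∀ i j, ∀ x : En n, a i j x = a j i x) ∧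
  ∀ x ∈ E, ∀ ξ : Fin n → ℝ,
    lam * (∑ i, ξ i ^ 2) ≤ (∑ i, ∑ j, a i j x * ξ i * ξ j) ∧
    (∑ i, ∑ j, a i j x * ξ i * ξ j) ≤ Lam * (∑ i, ξ i ^ 2)

/-- The characteristic polynomial `P(μ) = μ(μ-1)a_{ij}ν_iν_j + μ b_iν_i + c`,
expressed through a function `ν` recording the boundary values of `∇ρ`. -/
def Pchar (a : Fin n → Fin n → En n → ℝ) (b : Fin n → En n → ℝ) (c : En n → ℝ)
    (ν : En n → Fin n → ℝ) (μ : ℝ) (x : En n) : ℝ :=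
  μ * (μ - 1) * (∑ i, ∑ j, a i j x * ν x i * ν x j) + μ * (∑ i, b i x * ν x i) + c x

/-- `ρ` is a defining function for `Ω`, with `ν` the continuous extension of `∇ρ`
to the closure, of unit length on the boundary. -/
def DefiningFn (Ω : Set (En n)) (ρ : En n → ℝ) (ν : En n → Fin n → ℝ) : Prop :=
  (∀ x ∈ Ω, 0 < ρ x) ∧ (∀ x ∈ frontier Ω, ρ x = 0) ∧
  ContinuousOn ρ (closure Ω) ∧ ContDiffOn ℝ 1 ρ Ω ∧
  (∀ i, ContinuousOn (fun x => ν x i) (closure Ω)) ∧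
  (∀ x ∈ Ω, ∀ i, ν x i = pd i ρ x) ∧
  (∀ x ∈ frontier Ω, (∑ i, (ν x i) ^ 2) = 1)

end

open Set Filter Topology

/-- `w ∈ C^∞(Ω̄)`: smooth in `Ω` with all derivatives extending continuously to `Ω̄`. -/
def SmoothBar {n : ℕ} (Ω : Set (En n)) (w : En n → ℝ) : Prop :=
  ContDiffOn ℝ (⊤ : ℕ∞) w Ω ∧
  ∀ l : List (Fin n), ∃ g : En n → ℝ,
    ContinuousOn g (closure Ω) ∧ EqOn (pdAll l w) g Ω

/-- The operator `L = aρ²Δ + bρ∇ρ·∇ + c` (with constant coefficients `a, b, c`). -/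
noncomputable def LopEx {n : ℕ} (ρ : En n → ℝ) (a b c : ℝ) (w : En n → ℝ) (x : En n) : ℝ :=
  a * (ρ x) ^ 2 * (∑ i, pd2 i i w x)
    + b * ρ x * (∑ i, pd i ρ x * pd i w x) + c * w x

/-!
By the product and chain rules, `L(ψρˢ) = ρˢ (ρ η₀ + ((as(s-1) + bs)|∇ρ|² + c) ψ)` with `η₀`
built from `ψ, ρ` and their first two derivatives. Since `s` is a root of the indicial equation,
the bracket is `ρ η₀ + c (1 - |∇ρ|²) ψ = ρ (η₀ + c q ψ)`, which gives the extra factor `ρ`.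
The factor `η = η₀ + c q ψ` lies in `C^∞(Ω̄)` because that class is closed under sums, products
and partial derivatives.
-/

section SmoothBar

variable {n : ℕ} {Ω : Set (En n)}

def ExtendsContinuously (Ω : Set (En n)) (w : En n → ℝ) : Prop :=
  ∃ g : En n → ℝ, ContinuousOn g (closure Ω) ∧ EqOn w g Ω

theorem ExtendsContinuously.congr {u v : En n → ℝ} (hu : ExtendsContinuously Ω u)
    (huv : EqOn u v Ω) : ExtendsContinuously Ω v :=
  let ⟨g, hg, hug⟩ := hu
  ⟨g, hg, huv.symm.trans hug⟩

theorem ExtendsContinuously.add {u v : En n → ℝ} (hu : ExtendsContinuously Ω u)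
    (hv : ExtendsContinuously Ω v) : ExtendsContinuously Ω (fun x => u x + v x) :=
  let ⟨g, hg, hug⟩ := hu
  let ⟨h, hh, hvh⟩ := hv
  ⟨fun x => g x + h x, hg.add hh, fun x hx => by simp only [hug hx, hvh hx]⟩

theorem ExtendsContinuously.mul {u v : En n → ℝ} (hu : ExtendsContinuously Ω u)
    (hv : ExtendsContinuously Ω v) : ExtendsContinuously Ω (fun x => u x * v x) :=
  let ⟨g, hg, hug⟩ := hu
  let ⟨h, hh, hvh⟩ := hv
  ⟨fun x => g x * h x, hg.mul hh, fun x hx => by simp only [hug hx, hvh hx]⟩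

theorem pd_congr (hΩ : IsOpen Ω) {u v : En n → ℝ} (huv : EqOn u v Ω) (i : Fin n) :
    EqOn (pd i u) (pd i v) Ω := fun x hx => by
  rw [pd, pd, (eventuallyEq_of_mem (hΩ.mem_nhds hx) huv).fderiv_eq]

theorem pdAll_congr (hΩ : IsOpen Ω) {u v : En n → ℝ} (huv : EqOn u v Ω) (l : List (Fin n)) :
    EqOn (pdAll l u) (pdAll l v) Ω := by
  induction l with
  | nil => exact huv
  | cons i l ih => exact pd_congr hΩ ih i

theorem pdAll_pd (l : List (Fin n)) (i : Fin n) (w : En n → ℝ) :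
    pdAll l (pd i w) = pdAll (l ++ [i]) w := by
  induction l with
  | nil => rfl
  | cons j l ih => simp only [pdAll, ih, List.cons_append]

theorem pd_const (c : ℝ) (i : Fin n) : pd i (fun _ : En n => c) = fun _ => 0 := by
  funext x
  simp [pd]

theorem pd_add {u v : En n → ℝ} {x : En n} (hu : DifferentiableAt ℝ u x)
    (hv : DifferentiableAt ℝ v x) (i : Fin n) :
    pd i (fun y => u y + v y) x = pd i u x + pd i v x := by
  simp [pd, fderiv_fun_add hu hv]

theorem pd_mul {u v : En n → ℝ} {x : En n} (hu : DifferentiableAt ℝ u x)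
    (hv : DifferentiableAt ℝ v x) (i : Fin n) :
    pd i (fun y => u y * v y) x = pd i u x * v x + u x * pd i v x := by
  simp only [pd, fderiv_fun_mul hu hv, add_apply, smul_apply, smul_eq_mul]
  ring

theorem contDiffOn_pd (hΩ : IsOpen Ω) {k m : WithTop ℕ∞} {w : En n → ℝ}
    (hw : ContDiffOn ℝ k w Ω) (hmk : m + 1 ≤ k) (i : Fin n) : ContDiffOn ℝ m (pd i w) Ω :=
  (ContinuousLinearMap.apply ℝ ℝ (EuclideanSpace.single i (1 : ℝ))).contDiff.comp_contDiffOn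
    (hw.fderiv_of_isOpen hΩ hmk)

theorem contDiffOn_pdAll (hΩ : IsOpen Ω) {w : En n → ℝ} (hw : ContDiffOn ℝ (⊤ : ℕ∞) w Ω)
    (l : List (Fin n)) : ContDiffOn ℝ (⊤ : ℕ∞) (pdAll l w) Ω := by
  induction l with
  | nil => exact hw
  | cons i l ih => exact contDiffOn_pd hΩ ih le_rfl i

theorem pdAll_add (hΩ : IsOpen Ω) {u v : En n → ℝ} (hu : ContDiffOn ℝ (⊤ : ℕ∞) u Ω)
    (hv : ContDiffOn ℝ (⊤ : ℕ∞) v Ω) (l : List (Fin n)) :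
    EqOn (pdAll l (fun x => u x + v x)) (fun x => pdAll l u x + pdAll l v x) Ω := by
  induction l with
  | nil => exact fun _ _ => rfl
  | cons i l ih =>
    intro x hx
    have hdiff {w : En n → ℝ} (hw : ContDiffOn ℝ (⊤ : ℕ∞) w Ω) :
        DifferentiableAt ℝ (pdAll l w) x :=
      ((contDiffOn_pdAll hΩ hw l).contDiffAt (hΩ.mem_nhds hx)).differentiableAt (by simp)
    exact (pd_congr hΩ ih i hx).trans (pd_add (hdiff hu) (hdiff hv) i)

theorem SmoothBar.differentiableAt (hΩ : IsOpen Ω) {w : En n → ℝ} (hw : SmoothBar Ω w)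
    {x : En n} (hx : x ∈ Ω) : DifferentiableAt ℝ w x :=
  (hw.1.contDiffAt (hΩ.mem_nhds hx)).differentiableAt (by simp)

theorem smoothBar_const (c : ℝ) : SmoothBar Ω (fun _ => c) := by
  refine ⟨contDiffOn_const, fun l => ?_⟩
  induction l using List.reverseRecOn generalizing c with
  | nil => exact ⟨fun _ => c, continuousOn_const, eqOn_refl _ _⟩
  | append_singleton l i ih => rw [← pdAll_pd, pd_const]; exact ih 0

theorem smoothBar_pd (hΩ : IsOpen Ω) {w : En n → ℝ} (hw : SmoothBar Ω w) (i : Fin n) :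
    SmoothBar Ω (pd i w) :=
  ⟨contDiffOn_pd hΩ hw.1 le_rfl i, fun l => by rw [pdAll_pd]; exact hw.2 (l ++ [i])⟩

theorem smoothBar_add (hΩ : IsOpen Ω) {u v : En n → ℝ} (hu : SmoothBar Ω u)
    (hv : SmoothBar Ω v) : SmoothBar Ω (fun x => u x + v x) :=
  ⟨hu.1.add hv.1, fun l =>
    (ExtendsContinuously.add (hu.2 l) (hv.2 l)).congr (pdAll_add hΩ hu.1 hv.1 l).symm⟩

-- Inducting on the innermost derivative: `∂_l ∂_i (uv) = ∂_l (∂_i u · v) + ∂_l (u · ∂_i v)`.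
theorem smoothBar_mul (hΩ : IsOpen Ω) {u v : En n → ℝ} (hu : SmoothBar Ω u)
    (hv : SmoothBar Ω v) : SmoothBar Ω (fun x => u x * v x) := by
  refine ⟨hu.1.mul hv.1, fun l => ?_⟩
  induction l using List.reverseRecOn generalizing u v with
  | nil => exact ExtendsContinuously.mul (hu.2 []) (hv.2 [])
  | append_singleton l i ih =>
    have hleibniz : EqOn (pd i (fun x => u x * v x))
        (fun x => pd i u x * v x + u x * pd i v x) Ω := fun x hx =>
      pd_mul (hu.differentiableAt hΩ hx) (hv.differentiableAt hΩ hx) i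
    rw [← pdAll_pd]
    have hui := smoothBar_pd hΩ hu i
    have hvi := smoothBar_pd hΩ hv i
    refine (ExtendsContinuously.add (ih hui hv) (ih hu hvi)).congr ?_
    exact (pdAll_add hΩ (hui.1.mul hv.1) (hu.1.mul hvi.1) l).symm.trans
      (pdAll_congr hΩ hleibniz.symm l)

theorem smoothBar_sum (hΩ : IsOpen Ω) {ι : Type*} (t : Finset ι) {w : ι → En n → ℝ}
    (hw : ∀ k ∈ t, SmoothBar Ω (w k)) : SmoothBar Ω (fun x => ∑ k ∈ t, w k x) := by
  classical
  induction t using Finset.induction with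
  | empty => simpa using smoothBar_const (Ω := Ω) 0
  | insert k t hk ih =>
    simp only [Finset.sum_insert hk]
    exact smoothBar_add hΩ (hw k (t.mem_insert_self k))
      (ih fun j hj => hw j (Finset.mem_insert_of_mem hj))

end SmoothBar

section MonomialDerivatives

variable {n : ℕ} {Ω : Set (En n)}

noncomputable def lap (w : En n → ℝ) (x : En n) : ℝ := ∑ i, pd2 i i w x

noncomputable def gradInner (u w : En n → ℝ) (x : En n) : ℝ := ∑ i, pd i u x * pd i w x

theorem smoothBar_lap (hΩ : IsOpen Ω) {w : En n → ℝ} (hw : SmoothBar Ω w) :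
    SmoothBar Ω (lap w) :=
  smoothBar_sum hΩ _ fun i _ => smoothBar_pd hΩ (smoothBar_pd hΩ hw i) i

theorem smoothBar_gradInner (hΩ : IsOpen Ω) {u w : En n → ℝ} (hu : SmoothBar Ω u)
    (hw : SmoothBar Ω w) : SmoothBar Ω (gradInner u w) :=
  smoothBar_sum hΩ _ fun i _ => smoothBar_mul hΩ (smoothBar_pd hΩ hu i) (smoothBar_pd hΩ hw i)

theorem pd_mul_rpow {w ρ : En n → ℝ} {x : En n} (hw : DifferentiableAt ℝ w x)
    (hρ : DifferentiableAt ℝ ρ x) (hx : ρ x ≠ 0) (t : ℝ) (i : Fin n) :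
    pd i (fun y => w y * ρ y ^ t) x = (ρ x * pd i w x + t * w x * pd i ρ x) * ρ x ^ (t - 1) := by
  have H := hw.hasFDerivAt.fun_mul (hρ.hasFDerivAt.rpow_const (p := t) (Or.inl hx))
  simp only [pd, H.fderiv, Real.rpow_sub_one hx, add_apply, smul_apply, smul_eq_mul]
  field_simp
  ring

theorem gradInner_mul_rpow {ψ ρ : En n → ℝ} {x : En n} (hψ : DifferentiableAt ℝ ψ x)
    (hρ : DifferentiableAt ℝ ρ x) (hx : ρ x ≠ 0) (s : ℝ) :
    gradInner ρ (fun y => ψ y * ρ y ^ s) x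
      = (ρ x * gradInner ρ ψ x + s * ψ x * gradInner ρ ρ x) * ρ x ^ (s - 1) := by
  simp only [gradInner, pd_mul_rpow hψ hρ hx, Finset.mul_sum, Finset.sum_mul, add_mul,
    ← Finset.sum_add_distrib]
  exact Finset.sum_congr rfl fun i _ => by ring

theorem lap_mul_rpow (hΩ : IsOpen Ω) {ψ ρ : En n → ℝ} (hψ : ContDiffOn ℝ 2 ψ Ω)
    (hρ : ContDiffOn ℝ 2 ρ Ω) (hρ0 : ∀ y ∈ Ω, ρ y ≠ 0) (s : ℝ) {x : En n} (hx : x ∈ Ω) :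
    lap (fun y => ψ y * ρ y ^ s) x
      = (ρ x ^ 2 * lap ψ x + 2 * s * ρ x * gradInner ρ ψ x + s * ρ x * ψ x * lap ρ x
          + s * (s - 1) * ψ x * gradInner ρ ρ x) * ρ x ^ (s - 2) := by
  have hdiff {w : En n → ℝ} (hw : ContDiffOn ℝ 1 w Ω) {y : En n} (hy : y ∈ Ω) :
      DifferentiableAt ℝ w y :=
    (hw.contDiffAt (hΩ.mem_nhds hy)).differentiableAt one_ne_zero
  have hψ1 : ContDiffOn ℝ 1 ψ Ω := hψ.of_le (by norm_num)
  have hρ1 : ContDiffOn ℝ 1 ρ Ω := hρ.of_le (by norm_num)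
  have hpd {w : En n → ℝ} (hw : ContDiffOn ℝ 2 w Ω) (i : Fin n) :
      DifferentiableAt ℝ (pd i w) x :=
    hdiff (contDiffOn_pd hΩ hw (by norm_num) i) hx
  have hpd2 (i : Fin n) : pd2 i i (fun y => ψ y * ρ y ^ s) x
      = (ρ x * (pd i ρ x * pd i ψ x + ρ x * pd2 i i ψ x
            + s * (pd i ψ x * pd i ρ x + ψ x * pd2 i i ρ x))
          + (s - 1) * (ρ x * pd i ψ x + s * ψ x * pd i ρ x) * pd i ρ x) * ρ x ^ (s - 2) := by
    have hfirst : EqOn (pd i (fun y => ψ y * ρ y ^ s))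
        (fun y => (ρ y * pd i ψ y + s * ψ y * pd i ρ y) * ρ y ^ (s - 1)) Ω := fun y hy =>
      pd_mul_rpow (hdiff hψ1 hy) (hdiff hρ1 hy) (hρ0 y hy) s i
    have hψx := hdiff hψ1 hx
    have hρx := hdiff hρ1 hx
    have hψi := hpd hψ i
    have hρi := hpd hρ i
    rw [pd2, pd_congr hΩ hfirst i hx, pd_mul_rpow (by fun_prop) hρx (hρ0 x hx),
      pd_add (u := fun y => ρ y * pd i ψ y) (v := fun y => s * ψ y * pd i ρ y)
        (by fun_prop) (by fun_prop),
      pd_mul hρx hψi, pd_mul (u := fun y => s * ψ y) (by fun_prop) hρi,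
      pd_mul (differentiableAt_const s) hψx, pd_const, pd2, pd2, show s - 1 - 1 = s - 2 by ring]
    ring
  simp only [lap, gradInner, hpd2, Finset.mul_sum, Finset.sum_mul, add_mul,
    ← Finset.sum_add_distrib]
  exact Finset.sum_congr rfl fun i _ => by ring

theorem lopEx_mul_rpow (hΩ : IsOpen Ω) {ψ ρ : En n → ℝ}
    (hψ : ContDiffOn ℝ 2 ψ Ω) (hρ : ContDiffOn ℝ 2 ρ Ω) (hρ0 : ∀ y ∈ Ω, ρ y ≠ 0)
    (a b c s : ℝ) {x : En n} (hx : x ∈ Ω) :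
    LopEx ρ a b c (fun y => ψ y * ρ y ^ s) x
      = (ρ x * (a * ρ x * lap ψ x + (2 * a * s + b) * gradInner ρ ψ x + a * s * ψ x * lap ρ x)
          + ((a * s * (s - 1) + b * s) * gradInner ρ ρ x + c) * ψ x) * ρ x ^ s := by
  have hρx := hρ0 x hx
  have hdiff {w : En n → ℝ} (hw : ContDiffOn ℝ 2 w Ω) : DifferentiableAt ℝ w x :=
    (hw.contDiffAt (hΩ.mem_nhds hx)).differentiableAt two_ne_zero
  have hpow2 : ρ x ^ (s - 2) = ρ x ^ s / ρ x ^ 2 := by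
    exact_mod_cast Real.rpow_sub_natCast hρx s 2
  change a * ρ x ^ 2 * lap _ x + b * ρ x * gradInner ρ _ x + c * (ψ x * ρ x ^ s) = _
  rw [lap_mul_rpow hΩ hψ hρ hρ0 s hx, gradInner_mul_rpow (hdiff hψ) (hdiff hρ) hρx,
    Real.rpow_sub_one hρx, hpow2]
  field_simp
  ring

end MonomialDerivatives

theorem singular_monomial_factor_general
    {n : ℕ} (Ω : Set (En n)) (hΩo : IsOpen Ω)
    (ρ : En n → ℝ) (ν : En n → Fin n → ℝ)
    (hdef : DefiningFn Ω ρ ν) (hρ : SmoothBar Ω ρ)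
    (q : En n → ℝ) (hq : SmoothBar Ω q)
    (hq' : ∀ x ∈ Ω, 1 - (∑ i, (pd i ρ x) ^ 2) = ρ x * q x)
    (a b c s : ℝ)
    (hroot : a * s * (s - 1) + b * s + c = 0)
    (ψ : En n → ℝ) (hψ : SmoothBar Ω ψ) :
    ∃ η : En n → ℝ, SmoothBar Ω η ∧
      ∀ x ∈ Ω, LopEx ρ a b c (fun y => ψ y * ρ y ^ s) x = η x * ρ x ^ (s + 1) := by
  refine ⟨fun x => a * ρ x * lap ψ x + (2 * a * s + b) * gradInner ρ ψ x
      + a * s * ψ x * lap ρ x + c * q x * ψ x, ?_, fun x hx => ?_⟩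
  · exact smoothBar_add hΩo (smoothBar_add hΩo (smoothBar_add hΩo
      (smoothBar_mul hΩo (smoothBar_mul hΩo (smoothBar_const a) hρ) (smoothBar_lap hΩo hψ))
      (smoothBar_mul hΩo (smoothBar_const _) (smoothBar_gradInner hΩo hρ hψ)))
      (smoothBar_mul hΩo (smoothBar_mul hΩo (smoothBar_const _) hψ) (smoothBar_lap hΩo hρ)))
      (smoothBar_mul hΩo (smoothBar_mul hΩo (smoothBar_const c) hq) hψ)
  have hρx : 0 < ρ x := hdef.1 x hx
  have hgrad : gradInner ρ ρ x = 1 - ρ x * q x := by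
    rw [← hq' x hx]
    simp only [gradInner, sq, sub_sub_cancel]
  rw [lopEx_mul_rpow hΩo (hψ.1.of_le (by norm_cast)) (hρ.1.of_le (by norm_cast))
    (fun y hy => (hdef.1 y hy).ne') a b c s hx, Real.rpow_add_one hρx.ne', hgrad]
  linear_combination (1 - ρ x * q x) * ψ x * ρ x ^ s * hroot

/-- **Case 1 of Example 2.1**: if `s > 0` solves `as(s-1)+bs+c = 0`, then for every
`ψ ∈ C^∞(Ω̄)` one has `L(ψρˢ) = ηρ^{s+1}` for some `η ∈ C^∞(Ω̄)`. -/
theorem singular_monomial_factor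
    {n : ℕ} (Ω : Set (En n)) (hΩo : IsOpen Ω) (hΩb : Bornology.IsBounded Ω)
    (hΩconn : IsConnected Ω)
    (ρ : En n → ℝ) (ν : En n → Fin n → ℝ)
    (hdef : DefiningFn Ω ρ ν) (hρ : SmoothBar Ω ρ)
    (q : En n → ℝ) (hq : SmoothBar Ω q)
    (hq' : ∀ x ∈ Ω, 1 - (∑ i, (pd i ρ x) ^ 2) = ρ x * q x)
    (a b c s : ℝ) (ha : 0 < a) (hs : 0 < s)
    (hroot : a * s * (s - 1) + b * s + c = 0)
    (ψ : En n → ℝ) (hψ : SmoothBar Ω ψ) :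
    ∃ η : En n → ℝ, SmoothBar Ω η ∧
      ∀ x ∈ Ω, LopEx ρ a b c (fun y => ψ y * ρ y ^ s) x = η x * ρ x ^ (s + 1) :=
  singular_monomial_factor_general Ω hΩo ρ ν hdef hρ q hq hq' a b c s hroot ψ hψ
end

section
/- Let A>0 and α∈(0,1) be constants, w a function on G_1 that is α-Hölder continuous on compact subsets of G_1, and w_0 ∈ C^α(B'_1). Suppose that for every (x',t)∈G_1 with B_{t/2}(x',t) ⊂ G_1 one has |w(x',t) − w_0(x')| ≤ A t^α and [w]_{C^α(B_{t/2}(x',t))} ≤ A. Then w extends to a C^α function on Ḡ_r for every r∈(0,1), and |w|_{C^α(Ḡ_{1/2})} ≤ 5A + |w_0|_{C^α(B'_1)}. -/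
open Set Filter Topology

open Set Filter Topology

variable {d : ℕ}

/-- The normal coordinate `t = x_n`. -/
noncomputable def tc (x : En (d + 1)) : ℝ := x (Fin.last d)

/-- The tangential projection `x ↦ x'`. -/
noncomputable def proj (x : En (d + 1)) : En d := WithLp.toLp 2 (fun i : Fin d => x i.castSucc)

/-- The embedding `x' ↦ (x', 0)` of `ℝ^{n-1}` onto `{t = 0}`. -/
noncomputable def emb (y : En d) : En (d + 1) :=
  WithLp.toLp 2 (fun i : Fin (d + 1) => if h : (i : ℕ) < d then y ⟨i, h⟩ else 0)

/-- The half-cube `G_r = {(x',t) : |x'| < r, 0 < t < r}`. -/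
def G (d : ℕ) (r : ℝ) : Set (En (d + 1)) :=
  {x | ‖proj x‖ < r ∧ 0 < tc x ∧ tc x < r}

/-- The flat boundary portion `Σ_r = {(x',0) : |x'| < r}`. -/
def Sig (d : ℕ) (r : ℝ) : Set (En (d + 1)) :=
  {x | ‖proj x‖ < r ∧ tc x = 0}

/-- `Q(μ) = μ(μ-1)a_{nn} + μ b_n + c`, a function on `G_1`. -/
def Qf (a : Fin (d + 1) → Fin (d + 1) → En (d + 1) → ℝ)
    (b : Fin (d + 1) → En (d + 1) → ℝ) (c : En (d + 1) → ℝ)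
    (μ : ℝ) (x : En (d + 1)) : ℝ :=
  μ * (μ - 1) * a (Fin.last d) (Fin.last d) x + μ * b (Fin.last d) x + c x

/-- Partial derivatives taken within the closed set `Ḡ_1` (well defined up to the
boundary since `Ḡ_1` is convex). -/
noncomputable def pdW (i : Fin (d + 1)) (w : En (d + 1) → ℝ) (x : En (d + 1)) : ℝ :=
  fderivWithin ℝ w (closure (G d 1)) x (EuclideanSpace.single i 1)

/-- Iterated partial derivatives within `Ḡ_1`. -/
noncomputable def pdWAll : List (Fin (d + 1)) → (En (d + 1) → ℝ) → En (d + 1) → ℝ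
  | [], w => w
  | i :: l, w => pdW i (pdWAll l w)

/-- `w ∈ C^{k,β}(Ḡ_1)`. -/
def MemBarG (d k : ℕ) (β : ℝ) (w : En (d + 1) → ℝ) : Prop :=
  ContDiffOn ℝ k w (closure (G d 1)) ∧
  ∀ l : List (Fin (d + 1)), l.length = k →
    IsHolderOn β (closure (G d 1)) (pdWAll l w)

/-- The norm `|w|_{C^{k,β}(Ḡ_1)}`. -/
noncomputable def normCkG (d k : ℕ) (β : ℝ) (w : En (d + 1) → ℝ) : ℝ :=
  (∑ i ∈ Finset.range (k + 1), ∑ v : Fin i → Fin (d + 1),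
    supNorm (G d 1) (pdWAll (List.ofFn v) w)) +
  ∑ v : Fin k → Fin (d + 1), holderSemi β (G d 1) (pdWAll (List.ofFn v) w)

/-- Iterated tangential derivatives `D^τ_{x'} w` (interior derivatives). -/
noncomputable def pdTan (l : List (Fin d)) (w : En (d + 1) → ℝ) : En (d + 1) → ℝ :=
  pdAll (l.map Fin.castSucc) w

/-- The tangential derivative `∂_β w` taken within `Ḡ_1` (a line derivative). -/
noncomputable def tdW (β : Fin d) (w : En (d + 1) → ℝ) (x : En (d + 1)) : ℝ :=
  lineDerivWithin ℝ w (closure (G d 1)) x (EuclideanSpace.single β.castSucc 1)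

/-- Iterated tangential derivatives within `Ḡ_1`. -/
noncomputable def tdWAll : List (Fin d) → (En (d + 1) → ℝ) → En (d + 1) → ℝ
  | [], w => w
  | β :: l, w => tdW β (tdWAll l w)

/-- Partial derivatives in `ℝ^{n-1}` (for functions on the flat boundary). -/
noncomputable def pdE (i : Fin d) (w : En d → ℝ) (y : En d) : ℝ :=
  fderiv ℝ w y (EuclideanSpace.single i 1)

/-- Iterated partial derivatives in `ℝ^{n-1}`. -/
noncomputable def pdEAll : List (Fin d) → (En d → ℝ) → En d → ℝ
  | [], w => w
  | i :: l, w => pdE i (pdEAll l w)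

/-- The boundary value `u_0 = (f/c)(·,0)` as a function on `ℝ^{n-1}`. -/
noncomputable def bdryVal (f c : En (d + 1) → ℝ) (y : En d) : ℝ :=
  f (emb y) / c (emb y)

/-!
Near the flat boundary, two points `y, z` that are close compared with their heights lie in
one interior ball `B_{t/2}`, where `w` is `A`-Hölder. Otherwise both heights are at most
`2|y - z|`, so `w(y)` and `w(z)` are within `2A|y - z|^α` of `w₀(y')` and `w₀(z')`, which differ
by at most `[w₀]|y - z|^α`; this gives `[w] ≤ 4A + [w₀]` on `G_{1/2}`, and `|w| ≤ A + |w₀|`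
comes from the first hypothesis alone. On `G_r` the points not covered this way have height
bounded below, hence lie in a compact subset of `G_1` where `w` is Hölder by assumption; a
bounded, locally Hölder function is Hölder, and a uniformly continuous function extends
continuously to the closure.
-/
theorem UniformContinuousOn.exists_continuousOn_closure_eqOn {X Y : Type*} [UniformSpace X]
    [UniformSpace Y] [CompleteSpace Y] [T2Space Y] {f : X → Y} {s : Set X}
    (hf : UniformContinuousOn f s) :
    ∃ g : X → Y, ContinuousOn g (closure s) ∧ EqOn f g s := by
  refine ⟨extendFrom s f, continuousOn_extendFrom subset_rfl fun x hx => ?_,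
    fun x hx => (extendFrom_extends hf.continuousOn x hx).symm⟩
  have := mem_closure_iff_nhdsWithin_neBot.mp hx
  exact cauchy_map_iff_exists_tendsto.mp
    ((cauchy_nhds.mono nhdsWithin_le_nhds).map_of_le hf inf_le_right)

section Holder

variable {n : ℕ} {β : ℝ} {E : Set (En n)} {w : En n → ℝ}

theorem supNorm_nonneg : 0 ≤ supNorm E w :=
  Real.sSup_nonneg <| by rintro _ ⟨x, -, rfl⟩; exact abs_nonneg _

theorem holderSemi_nonneg : 0 ≤ holderSemi β E w :=
  Real.sSup_nonneg <| by rintro _ ⟨p, -, rfl⟩; positivity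

theorem supNorm_le {M : ℝ} (hM : 0 ≤ M) (h : ∀ x ∈ E, |w x| ≤ M) : supNorm E w ≤ M :=
  Real.sSup_le (by rintro _ ⟨x, hx, rfl⟩; exact h x hx) hM

theorem holderSemi_le {C : ℝ} (hC : 0 ≤ C)
    (h : ∀ x ∈ E, ∀ y ∈ E, |w x - w y| ≤ C * dist x y ^ β) : holderSemi β E w ≤ C := by
  refine Real.sSup_le ?_ hC
  rintro _ ⟨⟨x, y⟩, ⟨hx, hy⟩, rfl⟩
  rcases eq_or_ne x y with rfl | hxy
  · simpa using hC
  · exact div_le_of_le_mul₀ (by positivity) hC (h x hx y hy)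

theorem abs_le_supNorm (h : BoundedOn E w) {x : En n} (hx : x ∈ E) : |w x| ≤ supNorm E w := by
  obtain ⟨M, hM⟩ := h
  exact le_csSup ⟨M, by rintro _ ⟨y, hy, rfl⟩; exact hM y hy⟩ ⟨x, hx, rfl⟩

theorem IsHolderOn.abs_sub_le_holderSemi_mul (h : IsHolderOn β E w) {x y : En n}
    (hx : x ∈ E) (hy : y ∈ E) : |w x - w y| ≤ holderSemi β E w * dist x y ^ β := by
  obtain ⟨C, hC⟩ := h
  rcases eq_or_ne x y with rfl | hxy
  · simpa using mul_nonneg holderSemi_nonneg (by positivity)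
  have hpos : 0 < dist x y ^ β := Real.rpow_pos_of_pos (dist_pos.mpr hxy) β
  rw [← div_le_iff₀ hpos]
  refine le_csSup ⟨max C 0, ?_⟩ ⟨(x, y), ⟨hx, hy⟩, rfl⟩
  rintro _ ⟨⟨a, b⟩, ⟨ha, hb⟩, rfl⟩
  rcases eq_or_ne a b with rfl | hab
  · simp
  · exact div_le_of_le_mul₀ (by positivity) (le_max_right _ _)
      ((hC a ha b hb).trans (by gcongr; exact le_max_left _ _))

theorem IsHolderOn.uniformContinuousOn (hβ : 0 < β) (h : IsHolderOn β E w) :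
    UniformContinuousOn w E := by
  obtain ⟨C, hC⟩ := h
  have : HolderOnWith C.toNNReal β.toNNReal w E := by
    intro x hx y hy
    rw [edist_dist, edist_dist, Real.coe_toNNReal _ hβ.le,
      ENNReal.ofReal_rpow_of_nonneg dist_nonneg hβ.le, ← ENNReal.ofReal_coe_nnreal,
      ← ENNReal.ofReal_mul (by positivity)]
    exact ENNReal.ofReal_le_ofReal ((hC x hx y hy).trans (by gcongr; exact C.le_coe_toNNReal))
  exact this.uniformContinuousOn (by simpa using hβ)

theorem IsHolderOn.of_local {δ C : ℝ} (hβ : 0 ≤ β) (hδ : 0 < δ) (hbdd : BoundedOn E w)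
    (hloc : ∀ x ∈ E, ∀ y ∈ E, dist x y < δ → |w x - w y| ≤ C * dist x y ^ β) :
    IsHolderOn β E w := by
  obtain ⟨M, hM⟩ := hbdd
  refine ⟨max C (2 * M / δ ^ β), fun x hx y hy => ?_⟩
  rcases lt_or_ge (dist x y) δ with hnear | hfar
  · exact (hloc x hx y hy hnear).trans (by gcongr; exact le_max_left _ _)
  have hM0 : 0 ≤ M := (abs_nonneg _).trans (hM x hx)
  calc |w x - w y| ≤ |w x| + |w y| := abs_sub _ _
    _ ≤ 2 * M / δ ^ β * δ ^ β := by
      rw [div_mul_cancel₀ _ (Real.rpow_pos_of_pos hδ β).ne']; linarith [hM x hx, hM y hy]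
    _ ≤ max C (2 * M / δ ^ β) * dist x y ^ β := by gcongr; exact le_max_right _ _

end Holder

section HalfCube

variable {d : ℕ}

theorem dist_sq_eq_dist_proj_sq_add_sq (x y : En (d + 1)) :
    dist x y ^ 2 = dist (proj x) (proj y) ^ 2 + (tc x - tc y) ^ 2 := by
  rw [EuclideanSpace.dist_eq, EuclideanSpace.dist_eq, Real.sq_sqrt (by positivity),
    Real.sq_sqrt (by positivity), Fin.sum_univ_castSucc]
  simp only [proj, tc, Real.dist_eq, sq_abs, PiLp.toLp_apply]

theorem dist_proj_le (x y : En (d + 1)) : dist (proj x) (proj y) ≤ dist x y :=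
  (sq_le_sq₀ dist_nonneg dist_nonneg).mp <| by
    rw [dist_sq_eq_dist_proj_sq_add_sq x y]; nlinarith [sq_nonneg (tc x - tc y)]

theorem abs_tc_sub_le (x y : En (d + 1)) : |tc x - tc y| ≤ dist x y := by
  have h : (tc x - tc y) ^ 2 ≤ dist x y ^ 2 := by
    rw [dist_sq_eq_dist_proj_sq_add_sq x y]; nlinarith [sq_nonneg (dist (proj x) (proj y))]
  exact (sq_le_sq.mp h).trans_eq (abs_of_nonneg dist_nonneg)

theorem continuous_tc : Continuous (tc : En (d + 1) → ℝ) :=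
  (LipschitzWith.of_dist_le_mul (K := 1) fun x y => by
    simpa [Real.dist_eq] using abs_tc_sub_le x y).continuous

theorem continuous_proj : Continuous (proj : En (d + 1) → En d) :=
  (LipschitzWith.of_dist_le_mul (K := 1) fun x y => by
    simpa using dist_proj_le x y).continuous

theorem G_mono {r s : ℝ} (h : r ≤ s) : G d r ⊆ G d s :=
  fun _ ⟨h1, h2, h3⟩ => ⟨h1.trans_le h, h2, h3.trans_le h⟩

theorem isBounded_G (r : ℝ) : Bornology.IsBounded (G d r) := by
  refine (Metric.isBounded_closedBall (x := 0) (r := 2 * r)).subset fun x ⟨hp, ht0, htr⟩ => ?_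
  have h := dist_sq_eq_dist_proj_sq_add_sq x 0
  have hp0 : proj (0 : En (d + 1)) = 0 := by ext i; simp [proj]
  have ht0' : tc (0 : En (d + 1)) = 0 := by simp [tc]
  rw [hp0, ht0', sub_zero] at h
  rw [Metric.mem_closedBall]
  simp only [dist_zero_right] at h ⊢
  nlinarith [norm_nonneg (proj x), norm_nonneg x]

theorem closure_G_subset (r : ℝ) :
    closure (G d r) ⊆ {x | ‖proj x‖ ≤ r ∧ 0 ≤ tc x ∧ tc x ≤ r} :=
  closure_minimal (fun _ ⟨h1, h2, h3⟩ => ⟨h1.le, h2.le, h3.le⟩)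
    ((isClosed_le continuous_proj.norm continuous_const).inter
      ((isClosed_le continuous_const continuous_tc).inter
        (isClosed_le continuous_tc continuous_const)))

theorem isCompact_closure_G_inter (r c : ℝ) : IsCompact (closure (G d r) ∩ {x | c ≤ tc x}) :=
  (isBounded_G r).isCompact_closure.inter_right (isClosed_le continuous_const continuous_tc)

theorem closure_G_inter_subset_G_one {r c : ℝ} (hr : r < 1) (hc : 0 < c) :
    closure (G d r) ∩ {x | c ≤ tc x} ⊆ G d 1 := by
  rintro x ⟨hx, hcx⟩
  obtain ⟨hp, -, ht⟩ := closure_G_subset r hx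
  exact ⟨hp.trans_lt hr, hc.trans_le hcx, ht.trans_lt hr⟩

theorem ball_half_tc_subset_G_one {r : ℝ} {x : En (d + 1)} (hx : x ∈ G d r)
    (ht : tc x ≤ min (1 - r) (1 / 2)) : Metric.ball x (tc x / 2) ⊆ G d 1 := by
  obtain ⟨hp, ht0, -⟩ := hx
  obtain ⟨ht1, ht2⟩ := le_min_iff.mp ht
  intro y hy
  rw [Metric.mem_ball] at hy
  have hpy : ‖proj y‖ ≤ ‖proj x‖ + dist (proj y) (proj x) := by
    simpa [dist_eq_norm] using norm_le_norm_add_norm_sub' (proj y) (proj x)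
  have := dist_proj_le y x
  have := abs_lt.mp ((abs_tc_sub_le y x).trans_lt hy)
  exact ⟨by linarith, by linarith, by linarith⟩

end HalfCube

theorem Real.rpow_le_two_mul_rpow {α t s : ℝ} (hα : α ∈ Icc (0 : ℝ) 1) (ht : 0 ≤ t)
    (hts : t ≤ 2 * s) : t ^ α ≤ 2 * s ^ α :=
  calc t ^ α ≤ (2 * s) ^ α := Real.rpow_le_rpow ht hts hα.1
    _ = 2 ^ α * s ^ α := Real.mul_rpow zero_le_two (by linarith)
    _ ≤ 2 * s ^ α := by
      gcongr
      · exact Real.rpow_nonneg (by linarith) α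
      · simpa using Real.rpow_le_rpow_of_exponent_le one_le_two hα.2

section BoundaryTrace

variable {d : ℕ} {A α : ℝ} {w : En (d + 1) → ℝ} {w₀ : En d → ℝ}

theorem abs_le_add_supNorm_of_trace (hA : 0 ≤ A) (hα : 0 ≤ α)
    (hw₀b : BoundedOn (Metric.ball (0 : En d) 1) w₀) {x : En (d + 1)} (hx : x ∈ G d 1)
    (hwx : |w x - w₀ (proj x)| ≤ A * tc x ^ α) :
    |w x| ≤ A + supNorm (Metric.ball (0 : En d) 1) w₀ :=
  calc |w x| ≤ |w x - w₀ (proj x)| + |w₀ (proj x)| := by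
        linarith [abs_sub_abs_le_abs_sub (w x) (w₀ (proj x))]
    _ ≤ A * tc x ^ α + supNorm (Metric.ball (0 : En d) 1) w₀ :=
      add_le_add hwx (abs_le_supNorm hw₀b (mem_ball_zero_iff.mpr hx.1))
    _ ≤ A + supNorm (Metric.ball (0 : En d) 1) w₀ := by
      gcongr
      exact mul_le_of_le_one_right hA (Real.rpow_le_one hx.2.1.le hx.2.2.le hα)

theorem abs_sub_le_of_trace (hA : 0 ≤ A) (hα : α ∈ Icc (0 : ℝ) 1)
    (hw₀ : IsHolderOn α (Metric.ball (0 : En d) 1) w₀)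
    (h1 : ∀ x ∈ G d 1, Metric.ball x (tc x / 2) ⊆ G d 1 →
      |w x - w₀ (proj x)| ≤ A * tc x ^ α)
    (h2 : ∀ x ∈ G d 1, Metric.ball x (tc x / 2) ⊆ G d 1 →
      ∀ y ∈ Metric.ball x (tc x / 2), ∀ z ∈ Metric.ball x (tc x / 2),
        |w y - w z| ≤ A * dist y z ^ α)
    {y z : En (d + 1)} (hy : y ∈ G d 1) (hz : z ∈ G d 1)
    (hby : Metric.ball y (tc y / 2) ⊆ G d 1) (hbz : Metric.ball z (tc z / 2) ⊆ G d 1) :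
    |w y - w z| ≤ (4 * A + holderSemi α (Metric.ball (0 : En d) 1) w₀) * dist y z ^ α := by
  set H := holderSemi α (Metric.ball (0 : En d) 1) w₀
  have hH : 0 ≤ H := holderSemi_nonneg
  by_cases hny : dist z y < tc y / 2
  · exact (h2 y hy hby y (Metric.mem_ball_self (by linarith [hy.2.1])) z hny).trans
      (by gcongr; linarith)
  by_cases hnz : dist y z < tc z / 2
  · rw [abs_sub_comm, dist_comm]
    exact (h2 z hz hbz z (Metric.mem_ball_self (by linarith [hz.2.1])) y hnz).trans
      (by gcongr; linarith)
  -- both points are within twice their distance of the boundary: compare through `w₀`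
  rw [dist_comm] at hny
  have hty := Real.rpow_le_two_mul_rpow hα hy.2.1.le (by linarith : tc y ≤ 2 * dist y z)
  have htz := Real.rpow_le_two_mul_rpow hα hz.2.1.le (by linarith : tc z ≤ 2 * dist y z)
  have hw₀yz : |w₀ (proj y) - w₀ (proj z)| ≤ H * dist y z ^ α :=
    (hw₀.abs_sub_le_holderSemi_mul (mem_ball_zero_iff.mpr hy.1)
      (mem_ball_zero_iff.mpr hz.1)).trans (by gcongr; exacts [hα.1, dist_proj_le y z])
  have hwy := h1 y hy hby
  have hwz := h1 z hz hbz
  calc |w y - w z|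
      ≤ |w y - w₀ (proj y)| + |w₀ (proj y) - w₀ (proj z)| + |w z - w₀ (proj z)| := by
        rw [abs_sub_comm (w z)]
        linarith [abs_sub_le (w y) (w₀ (proj y)) (w z),
          abs_sub_le (w₀ (proj y)) (w₀ (proj z)) (w z)]
    _ ≤ A * (2 * dist y z ^ α) + H * dist y z ^ α + A * (2 * dist y z ^ α) := by
        gcongr
        exacts [hwy.trans (by gcongr), hwz.trans (by gcongr)]
    _ = (4 * A + H) * dist y z ^ α := by ring

theorem boundedOn_G (hA : 0 ≤ A) (hα : 0 < α)
    (hwloc : ∀ K : Set (En (d + 1)), K ⊆ G d 1 → IsCompact K → IsHolderOn α K w)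
    (hw₀b : BoundedOn (Metric.ball (0 : En d) 1) w₀)
    (h1 : ∀ x ∈ G d 1, Metric.ball x (tc x / 2) ⊆ G d 1 →
      |w x - w₀ (proj x)| ≤ A * tc x ^ α)
    {r : ℝ} (hr : r ∈ Ioo (0 : ℝ) 1) : BoundedOn (G d r) w := by
  set δ := min (1 - r) (1 / 2)
  have hδ : 0 < δ := lt_min (by linarith [hr.2]) one_half_pos
  have hK := isCompact_closure_G_inter (d := d) r δ
  obtain ⟨M, hM⟩ := hK.exists_bound_of_continuousOn
    ((hwloc _ (closure_G_inter_subset_G_one hr.2 hδ) hK).uniformContinuousOn hα).continuousOn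
  refine ⟨max (A + supNorm (Metric.ball (0 : En d) 1) w₀) M, fun x hx => ?_⟩
  rcases le_or_gt (tc x) δ with hnear | hfar
  · exact (abs_le_add_supNorm_of_trace hA hα.le hw₀b (G_mono hr.2.le hx)
      (h1 x (G_mono hr.2.le hx) (ball_half_tc_subset_G_one hx hnear))).trans (le_max_left _ _)
  · exact (hM x ⟨subset_closure hx, hfar.le⟩).trans (le_max_right _ _)

theorem isHolderOn_G (hA : 0 ≤ A) (hα : α ∈ Ioo (0 : ℝ) 1)
    (hwloc : ∀ K : Set (En (d + 1)), K ⊆ G d 1 → IsCompact K → IsHolderOn α K w)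
    (hw₀ : IsHolderOn α (Metric.ball (0 : En d) 1) w₀)
    (hw₀b : BoundedOn (Metric.ball (0 : En d) 1) w₀)
    (h1 : ∀ x ∈ G d 1, Metric.ball x (tc x / 2) ⊆ G d 1 →
      |w x - w₀ (proj x)| ≤ A * tc x ^ α)
    (h2 : ∀ x ∈ G d 1, Metric.ball x (tc x / 2) ⊆ G d 1 →
      ∀ y ∈ Metric.ball x (tc x / 2), ∀ z ∈ Metric.ball x (tc x / 2),
        |w y - w z| ≤ A * dist y z ^ α)
    {r : ℝ} (hr : r ∈ Ioo (0 : ℝ) 1) : IsHolderOn α (G d r) w := by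
  set δ := min (1 - r) (1 / 2)
  have hδ : 0 < δ := lt_min (by linarith [hr.2]) one_half_pos
  set K := closure (G d r) ∩ {x | δ / 2 ≤ tc x}
  obtain ⟨C, hC⟩ := hwloc K (closure_G_inter_subset_G_one hr.2 (half_pos hδ))
    (isCompact_closure_G_inter r _)
  have hball : ∀ x ∈ G d r, tc x ≤ δ → Metric.ball x (tc x / 2) ⊆ G d 1 :=
    fun x hx => ball_half_tc_subset_G_one hx
  refine IsHolderOn.of_local hα.1.le (half_pos hδ) (boundedOn_G hA hα.1 hwloc hw₀b h1 hr)
    (C := max (4 * A + holderSemi α (Metric.ball (0 : En d) 1) w₀) C) fun x hx y hy hxy => ?_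
  by_cases hnear : tc x ≤ δ ∧ tc y ≤ δ
  · exact (abs_sub_le_of_trace hA (Ioo_subset_Icc_self hα) hw₀ h1 h2 (G_mono hr.2.le hx)
      (G_mono hr.2.le hy) (hball x hx hnear.1) (hball y hy hnear.2)).trans
      (by gcongr; exact le_max_left _ _)
  -- one point is higher than `δ` and the other is `δ / 2`-close to it, so both lie in `K`
  have hfar : δ / 2 ≤ tc x ∧ δ / 2 ≤ tc y := by
    have := abs_lt.mp ((abs_tc_sub_le x y).trans_lt hxy)
    rw [not_and_or, not_le, not_le] at hnear
    constructor <;> rcases hnear with h | h <;> linarith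
  exact (hC x ⟨subset_closure hx, hfar.1⟩ y ⟨subset_closure hy, hfar.2⟩).trans
    (by gcongr; exact le_max_right _ _)

end BoundaryTrace

/-- **From interior estimates to global Hölder continuity** (Lemma 4.1). -/
theorem global_holder_from_interior
    {d : ℕ} (A α : ℝ) (hA : 0 < A) (hα : α ∈ Ioo (0 : ℝ) 1)
    (w : En (d + 1) → ℝ) (w₀ : En d → ℝ)
    (hwloc : ∀ K : Set (En (d + 1)), K ⊆ G d 1 → IsCompact K → IsHolderOn α K w)
    (hw₀ : IsHolderOn α (Metric.ball (0 : En d) 1) w₀)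
    (hw₀b : BoundedOn (Metric.ball (0 : En d) 1) w₀)
    (h1 : ∀ x ∈ G d 1, Metric.ball x (tc x / 2) ⊆ G d 1 →
      |w x - w₀ (proj x)| ≤ A * tc x ^ α)
    (h2 : ∀ x ∈ G d 1, Metric.ball x (tc x / 2) ⊆ G d 1 →
      ∀ y ∈ Metric.ball x (tc x / 2), ∀ z ∈ Metric.ball x (tc x / 2),
        |w y - w z| ≤ A * dist y z ^ α) :
    (∀ r ∈ Ioo (0 : ℝ) 1, IsHolderOn α (G d r) w ∧
      ∃ g : En (d + 1) → ℝ, ContinuousOn g (closure (G d r)) ∧ EqOn w g (G d r)) ∧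
    holderNorm α (G d (1 / 2)) w ≤
      5 * A + holderNorm α (Metric.ball (0 : En d) 1) w₀ := by
  have hG : ∀ r ∈ Ioo (0 : ℝ) 1, IsHolderOn α (G d r) w :=
    fun r => isHolderOn_G hA.le hα hwloc hw₀ hw₀b h1 h2
  refine ⟨fun r hr =>
    ⟨hG r hr, ((hG r hr).uniformContinuousOn hα.1).exists_continuousOn_closure_eqOn⟩, ?_⟩
  have hsub : G d (1 / 2) ⊆ G d 1 := G_mono one_half_lt_one.le
  have hball : ∀ x ∈ G d (1 / 2), Metric.ball x (tc x / 2) ⊆ G d 1 :=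
    fun x hx => ball_half_tc_subset_G_one hx (by norm_num; linarith [hx.2.2])
  set S₀ := supNorm (Metric.ball (0 : En d) 1) w₀
  set H₀ := holderSemi α (Metric.ball (0 : En d) 1) w₀
  have hS₀ : 0 ≤ S₀ := supNorm_nonneg
  have hH₀ : 0 ≤ H₀ := holderSemi_nonneg
  have hsup : supNorm (G d (1 / 2)) w ≤ A + S₀ :=
    supNorm_le (by linarith)
      fun x hx => abs_le_add_supNorm_of_trace hA.le hα.1.le hw₀b (hsub hx)
        (h1 x (hsub hx) (hball x hx))
  have hsemi : holderSemi α (G d (1 / 2)) w ≤ 4 * A + H₀ :=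
    holderSemi_le (by linarith)
      fun x hx y hy => abs_sub_le_of_trace hA.le (Ioo_subset_Icc_self hα) hw₀ h1 h2
        (hsub hx) (hsub hy) (hball x hx) (hball y hy)
  unfold holderNorm
  linarith
end
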